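/- arXiv:2506.00446 — 9 statements merged into one kernel-verified Lean document; each statement's English description precedes it below -/
import Mathlib

section
/- Assume common ranking embedding support: for all x ∈ X and s ∈ S, pS(s|x,π) > 0 implies pS(s|x,π₀) > 0. Assume the user behavior model on ranking embeddings: q(x,a,e) = q̃(x,Φ(e)) for some q̃ : X → S → ℝ and all x,a,e. Then the GMIPS estimator is unbiased: Σ_{x} p(x) · Σ_{a} π₀(a|x) · Σ_{e} pe(x,a,e) · w_Φ(x,e) · q(x,a,e) = Σ_{x} p(x) · Σ_{a} π(a|x) · Σ_{e} pe(x,a,e) · q(x,a,e), where w_Φ(x,e) := pS(Φ(e)|x,π)/pS(Φ(e)|x,π₀) and division by zero is interpreted as zero. -/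
open Finset

/-- Marginal embedding distribution of a policy `ρ`:
`pE(e|x,ρ) = ∑ a, ρ(a|x) · pe(x,a,e)`. -/
noncomputable def pE {X A E : Type*} [Fintype A]
    (pe : X → A → E → ℝ) (ρ : X → A → ℝ) (x : X) (e : E) : ℝ :=
  ∑ a, ρ x a * pe x a e

/-- Doubly marginal distribution over the embedding subset space:
`pS(s|x,ρ) = ∑ e, pE(e|x,ρ) · 𝟙{Φ(e)=s}`. -/
noncomputable def pS {X A E S : Type*} [Fintype A] [Fintype E] [DecidableEq S]
    (pe : X → A → E → ℝ) (ρ : X → A → ℝ) (Φ : E → S) (x : X) (s : S) : ℝ :=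
  ∑ e, pE pe ρ x e * (if Φ e = s then 1 else 0)

lemma sum_pE_mul {X A E S : Type*} [Fintype A] [Fintype E] [Fintype S] [DecidableEq S]
    (pe : X → A → E → ℝ) (ρ : X → A → ℝ) (Φ : E → S) (x : X) (g : S → ℝ) :
    ∑ e, pE pe ρ x e * g (Φ e) = ∑ s, pS pe ρ Φ x s * g s := by
  simp only [pS, Finset.sum_mul]
  rw [Finset.sum_comm]
  refine Finset.sum_congr rfl fun e _ => ?_
  rw [Finset.sum_eq_single (Φ e)]
  · simp
  · intro s _ hs; simp [Ne.symm hs]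
  · simp

lemma pS_nonneg {X A E S : Type*} [Fintype A] [Fintype E] [DecidableEq S]
    (pe : X → A → E → ℝ) (ρ : X → A → ℝ) (Φ : E → S) (x : X) (s : S)
    (hρ : ∀ a, 0 ≤ ρ x a) (hpe : ∀ a e, 0 ≤ pe x a e) :
    0 ≤ pS pe ρ Φ x s := by
  apply Finset.sum_nonneg; intro e _
  apply mul_nonneg
  · exact Finset.sum_nonneg fun a _ => mul_nonneg (hρ a) (hpe a e)
  · positivity

/-- Unbiasedness of the GMIPS estimator (Proposition 3.6): under common
ranking embedding support and the user behavior model on ranking embeddings,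
the GMIPS estimand equals the position-wise policy value of the target policy. -/
theorem gmips_unbiased
    {X A E S : Type*} [Fintype X] [Fintype A] [Fintype E] [Fintype S] [DecidableEq S]
    [Nonempty X] [Nonempty A] [Nonempty E] [Nonempty S]
    (p : X → ℝ) (hp_nonneg : ∀ x, 0 ≤ p x) (hp_sum : ∑ x, p x = 1)
    (π π₀ : X → A → ℝ)
    (hπ_nonneg : ∀ x a, 0 ≤ π x a) (hπ_sum : ∀ x, ∑ a, π x a = 1)
    (hπ₀_nonneg : ∀ x a, 0 ≤ π₀ x a) (hπ₀_sum : ∀ x, ∑ a, π₀ x a = 1)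
    (pe : X → A → E → ℝ)
    (hpe_nonneg : ∀ x a e, 0 ≤ pe x a e) (hpe_sum : ∀ x a, ∑ e, pe x a e = 1)
    (Φ : E → S) (q : X → A → E → ℝ)
    (hsupp : ∀ x s, 0 < pS pe π Φ x s → 0 < pS pe π₀ Φ x s)
    (hq : ∃ qt : X → S → ℝ, ∀ x a e, q x a e = qt x (Φ e)) :
    ∑ x, p x * ∑ a, π₀ x a * ∑ e, pe x a e *
        (pS pe π Φ x (Φ e) / pS pe π₀ Φ x (Φ e) * q x a e)
      = ∑ x, p x * ∑ a, π x a * ∑ e, pe x a e * q x a e := by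
  obtain ⟨qt, hqt⟩ := hq
  refine Finset.sum_congr rfl fun x _ => ?_
  congr 1
  -- rewrite both sides as sums over e of pE * f(Φ e)
  have key : ∀ (ρ : X → A → ℝ) (f : S → ℝ),
      ∑ a, ρ x a * ∑ e, pe x a e * f (Φ e) = ∑ e, pE pe ρ x e * f (Φ e) := by
    intro ρ f
    simp only [Finset.mul_sum, pE, Finset.sum_mul]
    rw [Finset.sum_comm]
    ring_nf
  calc ∑ a, π₀ x a * ∑ e, pe x a e *
        (pS pe π Φ x (Φ e) / pS pe π₀ Φ x (Φ e) * q x a e)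
      = ∑ a, π₀ x a * ∑ e, pe x a e *
        ((fun s => pS pe π Φ x s / pS pe π₀ Φ x s * qt x s) (Φ e)) := by
        refine Finset.sum_congr rfl fun a _ => ?_
        congr 1
        refine Finset.sum_congr rfl fun e _ => ?_
        rw [hqt]
    _ = ∑ s, pS pe π₀ Φ x s * (pS pe π Φ x s / pS pe π₀ Φ x s * qt x s) := by
        exact (key π₀ (fun s => pS pe π Φ x s / pS pe π₀ Φ x s * qt x s)).trans (sum_pE_mul pe π₀ Φ x (fun s => pS pe π Φ x s / pS pe π₀ Φ x s * qt x s))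
    _ = ∑ s, pS pe π Φ x s * qt x s := by
        refine Finset.sum_congr rfl fun s _ => ?_
        rcases eq_or_ne (pS pe π₀ Φ x s) 0 with h0 | h0
        · have hπs : pS pe π Φ x s = 0 := by
            by_contra h
            have hpos : 0 < pS pe π Φ x s :=
              lt_of_le_of_ne (pS_nonneg pe π Φ x s (hπ_nonneg x) (fun a e => hpe_nonneg x a e)) (Ne.symm h)
            exact absurd (hsupp x s hpos) (by simp [h0])
          simp [h0, hπs]
        · field_simp
    _ = ∑ a, π x a * ∑ e, pe x a e * q x a e := by
        have h1 : ∑ a, π x a * ∑ e, pe x a e * q x a e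
            = ∑ a, π x a * ∑ e, pe x a e * ((fun s => qt x s) (Φ e)) := by
          refine Finset.sum_congr rfl fun a _ => ?_
          congr 1
          refine Finset.sum_congr rfl fun e _ => ?_
          rw [hqt]
        rw [h1, key π (fun s => qt x s)]
        exact (sum_pE_mul pe π Φ x _).symm
end

section
/- Assume: (i) π₀(a|x) > 0 for all x,a and pE(e|x,π₀) > 0 for all x,e; (ii) the conditional law of Φ(e) given the action depends on the action only through Ψ(a), i.e. there is κ : X → T → S → ℝ with Σ_{e} pe(x,a,e)·𝟙{Φ(e)=s} = κ(x,Ψ(a),s) for all x,a,s; (iii) R2 : X → S → ℝ is any function (the conditional second moment of the reward given (x,Φ(e))). Then Σ_{x} p(x) Σ_{a} π₀(a|x) Σ_{e} pe(x,a,e) · (w_Ψ(x,a)² − w_Φ(x,e)²) · R2(x,Φ(e)) = Σ_{x} p(x) Σ_{s∈S} pS(s|x,π₀) · R2(x,s) · [ Σ_{t∈T} π₀(t|x,s)·ŵ(x,t)² − ( Σ_{t∈T} π₀(t|x,s)·ŵ(x,t) )² ], i.e. the reduction in (scaled) variance of GMIPS relative to GIPS equals the π₀-expectation of the conditional second moment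 of the reward times the conditional variance of the generalized importance weight, where division by zero is interpreted as zero. -/
open Finset

/-- Marginal distribution over the action subset space:
`pT(t|x,ρ) = ∑ a, ρ(a|x) · 𝟙{Ψ(a)=t}`. -/
noncomputable def pT {X A T : Type*} [Fintype A] [DecidableEq T]
    (ρ : X → A → ℝ) (Ψ : A → T) (x : X) (t : T) : ℝ :=
  ∑ a, ρ x a * (if Ψ a = t then 1 else 0)

/-- Joint logging distribution of `(Ψ(a), Φ(e))` given `x`:
`J(x,t,s) = ∑ a, ∑ e, π₀(a|x) · pe(x,a,e) · 𝟙{Ψ(a)=t} · 𝟙{Φ(e)=s}`. -/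
noncomputable def Jlog {X A E S T : Type*} [Fintype A] [Fintype E]
    [DecidableEq S] [DecidableEq T]
    (pe : X → A → E → ℝ) (π₀ : X → A → ℝ) (Ψ : A → T) (Φ : E → S)
    (x : X) (t : T) (s : S) : ℝ :=
  ∑ a, ∑ e, π₀ x a * pe x a e * (if Ψ a = t then 1 else 0) *
    (if Φ e = s then 1 else 0)

/-- Group a sum over `α` along the fibers of `Ψ : α → β`. -/
lemma sum_group {α β : Type*} [Fintype α] [Fintype β] [DecidableEq β]
    (F : α → ℝ) (G : β → ℝ) (Ψ : α → β) :
    ∑ a, F a * G (Ψ a) = ∑ t, (∑ a, F a * (if Ψ a = t then 1 else 0)) * G t := by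
  simp_rw [Finset.sum_mul, mul_ite, mul_one, mul_zero, ite_mul, zero_mul]
  rw [Finset.sum_comm]
  simp [Finset.sum_ite_eq]

/-- Variance reduction of GMIPS relative to GIPS (Theorem 3.7): the
difference of the (scaled) variances equals the `π₀`-expectation of the
conditional second moment of the reward times the conditional variance of
the generalized importance weight. -/
theorem gmips_variance_reduction_vs_gips
    {X A E S T : Type*}
    [Fintype X] [Fintype A] [Fintype E] [Fintype S] [Fintype T]
    [DecidableEq S] [DecidableEq T]
    [Nonempty X] [Nonempty A] [Nonempty E] [Nonempty S] [Nonempty T]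
    (p : X → ℝ) (hp_nonneg : ∀ x, 0 ≤ p x) (hp_sum : ∑ x, p x = 1)
    (π π₀ : X → A → ℝ)
    (hπ_nonneg : ∀ x a, 0 ≤ π x a) (hπ_sum : ∀ x, ∑ a, π x a = 1)
    (hπ₀_nonneg : ∀ x a, 0 ≤ π₀ x a) (hπ₀_sum : ∀ x, ∑ a, π₀ x a = 1)
    (pe : X → A → E → ℝ)
    (hpe_nonneg : ∀ x a e, 0 ≤ pe x a e) (hpe_sum : ∀ x a, ∑ e, pe x a e = 1)
    (Φ : E → S) (Ψ : A → T)
    (hπ₀_pos : ∀ x a, 0 < π₀ x a)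
    (hpE_pos : ∀ x e, 0 < pE pe π₀ x e)
    (hκ : ∃ κ : X → T → S → ℝ, ∀ x a s,
      (∑ e, pe x a e * (if Φ e = s then 1 else 0)) = κ x (Ψ a) s)
    (R2 : X → S → ℝ) :
    ∑ x, p x * ∑ a, π₀ x a * ∑ e, pe x a e *
        ((pT π Ψ x (Ψ a) / pT π₀ Ψ x (Ψ a)) ^ 2
          - (pS pe π Φ x (Φ e) / pS pe π₀ Φ x (Φ e)) ^ 2) * R2 x (Φ e)
      = ∑ x, p x * ∑ s, pS pe π₀ Φ x s * R2 x s *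
          ((∑ t, (Jlog pe π₀ Ψ Φ x t s / pS pe π₀ Φ x s) *
              (pT π Ψ x t / pT π₀ Ψ x t) ^ 2)
            - (∑ t, (Jlog pe π₀ Ψ Φ x t s / pS pe π₀ Φ x s) *
                (pT π Ψ x t / pT π₀ Ψ x t)) ^ 2) := by
  obtain ⟨κ, hκ⟩ := hκ
  refine Finset.sum_congr rfl fun x _ => ?_
  congr 1
  -- basic structural lemmas at fixed x
  have h1 : ∀ (ρ : X → A → ℝ) (s : S),
      pS pe ρ Φ x s = ∑ t, pT ρ Ψ x t * κ x t s := by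
    intro ρ s
    have step : pS pe ρ Φ x s = ∑ a, ρ x a * κ x (Ψ a) s := by
      simp only [pS, pE, Finset.sum_mul]
      rw [Finset.sum_comm]
      refine Finset.sum_congr rfl fun a _ => ?_
      rw [← hκ x a s, Finset.mul_sum]
      exact Finset.sum_congr rfl fun e _ => by ring
    rw [step, sum_group (fun a => ρ x a) (fun t => κ x t s) Ψ]
    rfl
  have h2 : ∀ (t : T) (s : S),
      Jlog pe π₀ Ψ Φ x t s = pT π₀ Ψ x t * κ x t s := by
    intro t s
    simp only [Jlog, pT, Finset.sum_mul]
    refine Finset.sum_congr rfl fun a _ => ?_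
    by_cases hΨ : Ψ a = t
    · subst hΨ
      simp only [if_pos rfl, mul_one]
      rw [← hκ x a s, Finset.mul_sum]
      exact Finset.sum_congr rfl fun e _ => by ring
    · simp [hΨ]
  have h3 : ∀ t : T, pT π₀ Ψ x t = 0 → pT π Ψ x t = 0 := by
    intro t h0
    have hz := (Finset.sum_eq_zero_iff_of_nonneg
      (fun a _ => mul_nonneg (hπ₀_nonneg x a)
        (by split_ifs <;> norm_num : (0:ℝ) ≤ if Ψ a = t then 1 else 0))).mp h0
    apply Finset.sum_eq_zero
    intro a _
    have ha := hz a (Finset.mem_univ a)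
    by_cases hΨ : Ψ a = t
    · rw [if_pos hΨ, mul_one] at ha
      exact absurd ha (ne_of_gt (hπ₀_pos x a))
    · simp [hΨ]
  -- Jlog is nonneg, and sums to pS₀ over t
  have hJnn : ∀ (t : T) (s : S), 0 ≤ Jlog pe π₀ Ψ Φ x t s := by
    intro t s
    refine Finset.sum_nonneg fun a _ => Finset.sum_nonneg fun e _ => ?_
    refine mul_nonneg (mul_nonneg (mul_nonneg (hπ₀_nonneg x a) (hpe_nonneg x a e)) ?_) ?_ <;>
      split_ifs <;> norm_num
  have hJsum : ∀ s : S, ∑ t, Jlog pe π₀ Ψ Φ x t s = pS pe π₀ Φ x s := by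
    intro s
    rw [h1 π₀ s]
    exact Finset.sum_congr rfl fun t _ => h2 t s
  have hJzero : ∀ s : S, pS pe π₀ Φ x s = 0 → ∀ t, Jlog pe π₀ Ψ Φ x t s = 0 := by
    intro s h0 t
    have := (Finset.sum_eq_zero_iff_of_nonneg (fun t _ => hJnn t s)).mp
      (by rw [hJsum s, h0])
    exact this t (Finset.mem_univ t)
  -- split the LHS
  have hsplit : ∑ a, π₀ x a * ∑ e, pe x a e *
        ((pT π Ψ x (Ψ a) / pT π₀ Ψ x (Ψ a)) ^ 2
          - (pS pe π Φ x (Φ e) / pS pe π₀ Φ x (Φ e)) ^ 2) * R2 x (Φ e)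
      = (∑ a, π₀ x a * ∑ e, pe x a e *
            (pT π Ψ x (Ψ a) / pT π₀ Ψ x (Ψ a)) ^ 2 * R2 x (Φ e))
        - (∑ a, π₀ x a * ∑ e, pe x a e *
            (pS pe π Φ x (Φ e) / pS pe π₀ Φ x (Φ e)) ^ 2 * R2 x (Φ e)) := by
    rw [← Finset.sum_sub_distrib]
    refine Finset.sum_congr rfl fun a _ => ?_
    rw [← mul_sub, ← Finset.sum_sub_distrib]
    congr 1
    exact Finset.sum_congr rfl fun e _ => by ring
  -- part A
  have hA : (∑ a, π₀ x a * ∑ e, pe x a e *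
        (pT π Ψ x (Ψ a) / pT π₀ Ψ x (Ψ a)) ^ 2 * R2 x (Φ e))
      = ∑ s, (∑ t, Jlog pe π₀ Ψ Φ x t s * (pT π Ψ x t / pT π₀ Ψ x t) ^ 2) * R2 x s := by
    have inner : ∀ a : A, (∑ e, pe x a e *
          (pT π Ψ x (Ψ a) / pT π₀ Ψ x (Ψ a)) ^ 2 * R2 x (Φ e))
        = (pT π Ψ x (Ψ a) / pT π₀ Ψ x (Ψ a)) ^ 2 * ∑ s, κ x (Ψ a) s * R2 x s := by
      intro a
      rw [Finset.mul_sum]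
      have : (∑ e, pe x a e * R2 x (Φ e)) = ∑ s, κ x (Ψ a) s * R2 x s := by
        rw [sum_group (fun e => pe x a e) (fun s => R2 x s) Φ]
        exact Finset.sum_congr rfl fun s _ => by rw [hκ x a s]
      calc (∑ e, pe x a e * (pT π Ψ x (Ψ a) / pT π₀ Ψ x (Ψ a)) ^ 2 * R2 x (Φ e))
          = (pT π Ψ x (Ψ a) / pT π₀ Ψ x (Ψ a)) ^ 2 * ∑ e, pe x a e * R2 x (Φ e) := by
            rw [Finset.mul_sum]; exact Finset.sum_congr rfl fun e _ => by ring
        _ = _ := by rw [this, Finset.mul_sum]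
    calc (∑ a, π₀ x a * ∑ e, pe x a e *
            (pT π Ψ x (Ψ a) / pT π₀ Ψ x (Ψ a)) ^ 2 * R2 x (Φ e))
        = ∑ a, π₀ x a * ((pT π Ψ x (Ψ a) / pT π₀ Ψ x (Ψ a)) ^ 2
            * ∑ s, κ x (Ψ a) s * R2 x s) := by
          exact Finset.sum_congr rfl fun a _ => by rw [inner a]
      _ = ∑ t, pT π₀ Ψ x t * ((pT π Ψ x t / pT π₀ Ψ x t) ^ 2
            * ∑ s, κ x t s * R2 x s) := by
          rw [sum_group (fun a => π₀ x a)
            (fun t => (pT π Ψ x t / pT π₀ Ψ x t) ^ 2 * ∑ s, κ x t s * R2 x s) Ψ]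
          rfl
      _ = ∑ t, ∑ s, (pT π₀ Ψ x t * κ x t s)
            * (pT π Ψ x t / pT π₀ Ψ x t) ^ 2 * R2 x s := by
          refine Finset.sum_congr rfl fun t _ => ?_
          rw [Finset.mul_sum, Finset.mul_sum]
          exact Finset.sum_congr rfl fun s _ => by ring
      _ = ∑ s, ∑ t, (pT π₀ Ψ x t * κ x t s)
            * (pT π Ψ x t / pT π₀ Ψ x t) ^ 2 * R2 x s := Finset.sum_comm
      _ = _ := by
          refine Finset.sum_congr rfl fun s _ => ?_
          rw [Finset.sum_mul]
          exact Finset.sum_congr rfl fun t _ => by rw [← h2 t s]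
  -- part B
  have hB : (∑ a, π₀ x a * ∑ e, pe x a e *
        (pS pe π Φ x (Φ e) / pS pe π₀ Φ x (Φ e)) ^ 2 * R2 x (Φ e))
      = ∑ s, pS pe π₀ Φ x s
          * ((pS pe π Φ x s / pS pe π₀ Φ x s) ^ 2 * R2 x s) := by
    calc (∑ a, π₀ x a * ∑ e, pe x a e *
            (pS pe π Φ x (Φ e) / pS pe π₀ Φ x (Φ e)) ^ 2 * R2 x (Φ e))
        = ∑ e, pE pe π₀ x e * ((pS pe π Φ x (Φ e) / pS pe π₀ Φ x (Φ e)) ^ 2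
            * R2 x (Φ e)) := by
          simp only [Finset.mul_sum]
          rw [Finset.sum_comm]
          refine Finset.sum_congr rfl fun e _ => ?_
          simp only [pE, Finset.sum_mul]
          exact Finset.sum_congr rfl fun a _ => by ring
      _ = _ := by
          rw [sum_group (fun e => pE pe π₀ x e)
            (fun s => (pS pe π Φ x s / pS pe π₀ Φ x s) ^ 2 * R2 x s) Φ]
          rfl
  -- per-s identities for the RHS
  have c1 : ∀ s : S, pS pe π₀ Φ x s
        * (∑ t, (Jlog pe π₀ Ψ Φ x t s / pS pe π₀ Φ x s)
            * (pT π Ψ x t / pT π₀ Ψ x t) ^ 2)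
      = ∑ t, Jlog pe π₀ Ψ Φ x t s * (pT π Ψ x t / pT π₀ Ψ x t) ^ 2 := by
    intro s
    by_cases h0 : pS pe π₀ Φ x s = 0
    · rw [h0, zero_mul]
      symm
      exact Finset.sum_eq_zero fun t _ => by rw [hJzero s h0 t, zero_mul]
    · rw [Finset.mul_sum]
      refine Finset.sum_congr rfl fun t _ => ?_
      field_simp
  have c2 : ∀ s : S, (∑ t, (Jlog pe π₀ Ψ Φ x t s / pS pe π₀ Φ x s)
        * (pT π Ψ x t / pT π₀ Ψ x t))
      = pS pe π Φ x s / pS pe π₀ Φ x s := by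
    intro s
    by_cases h0 : pS pe π₀ Φ x s = 0
    · rw [h0, div_zero]
      exact Finset.sum_eq_zero fun t _ => by rw [hJzero s h0 t, zero_div, zero_mul]
    · have hπS : pS pe π Φ x s
          = ∑ t, (pT π Ψ x t / pT π₀ Ψ x t) * Jlog pe π₀ Ψ Φ x t s := by
        rw [h1 π s]
        refine Finset.sum_congr rfl fun t _ => ?_
        rw [h2 t s]
        by_cases ht : pT π₀ Ψ x t = 0
        · rw [h3 t ht, ht]; ring
        · field_simp
      rw [hπS, Finset.sum_div]
      refine Finset.sum_congr rfl fun t _ => ?_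
      ring
  -- assemble
  rw [hsplit, hA, hB, ← Finset.sum_sub_distrib]
  refine Finset.sum_congr rfl fun s _ => ?_
  rw [mul_sub, c2 s]
  have c1' := c1 s
  rw [← c1']
  ring
end

section
/- Assume: (i) π₀(a|x) > 0 for all x,a and pE(e|x,π₀) > 0 for all x,e; (ii) there is κ : X → T → S → ℝ with Σ_{e} pe(x,a,e)·𝟙{Φ(e)=s} = κ(x,Ψ(a),s) for all x,a,s; (iii) R2 : X → S → ℝ satisfies R2(x,s) ≥ 0 for all x,s. Then Σ_{x} p(x) Σ_{a} π₀(a|x) Σ_{e} pe(x,a,e) · (w_Ψ(x,a)² − w_Φ(x,e)²) · R2(x,Φ(e)) ≥ 0; that is, the second moment of the GMIPS estimand never exceeds that of the GIPS estimand, so GMIPS has no larger variance than GIPS under these assumptions. -/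
open Finset

section Aux

variable {X A E S T : Type*} [Fintype A] [Fintype E] [Fintype S] [Fintype T]
  [DecidableEq S] [DecidableEq T]

/-- Sum over actions of a function of `Ψ a` equals a `pT`-weighted sum over `T`. -/
lemma sum_comp_pT (ρ : X → A → ℝ) (Ψ : A → T) (x : X) (F : T → ℝ) :
    ∑ a, ρ x a * F (Ψ a) = ∑ t, pT ρ Ψ x t * F t := by
  unfold pT
  simp_rw [Finset.sum_mul]
  rw [Finset.sum_comm]
  refine Finset.sum_congr rfl fun a _ => ?_
  simp [mul_ite, ite_mul]

/-- `pS` as a sum over actions. -/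
lemma pS_eq_sum (pe : X → A → E → ℝ) (ρ : X → A → ℝ) (Φ : E → S) (x : X) (s : S) :
    pS pe ρ Φ x s = ∑ a, ρ x a * ∑ e, pe x a e * (if Φ e = s then 1 else 0) := by
  unfold pS pE
  simp_rw [Finset.sum_mul, Finset.mul_sum]
  rw [Finset.sum_comm]
  refine Finset.sum_congr rfl fun a _ => Finset.sum_congr rfl fun e _ => ?_
  ring

end Aux

/-- GMIPS has no larger variance than GIPS (Theorem 3.7, inequality form):
the second moment of the GMIPS estimand never exceeds that of the GIPS
estimand under the stated assumptions. -/
theorem gmips_second_moment_le_gips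
    {X A E S T : Type*}
    [Fintype X] [Fintype A] [Fintype E] [Fintype S] [Fintype T]
    [DecidableEq S] [DecidableEq T]
    [Nonempty X] [Nonempty A] [Nonempty E] [Nonempty S] [Nonempty T]
    (p : X → ℝ) (hp_nonneg : ∀ x, 0 ≤ p x) (hp_sum : ∑ x, p x = 1)
    (π π₀ : X → A → ℝ)
    (hπ_nonneg : ∀ x a, 0 ≤ π x a) (hπ_sum : ∀ x, ∑ a, π x a = 1)
    (hπ₀_nonneg : ∀ x a, 0 ≤ π₀ x a) (hπ₀_sum : ∀ x, ∑ a, π₀ x a = 1)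
    (pe : X → A → E → ℝ)
    (hpe_nonneg : ∀ x a e, 0 ≤ pe x a e) (hpe_sum : ∀ x a, ∑ e, pe x a e = 1)
    (Φ : E → S) (Ψ : A → T)
    (hπ₀_pos : ∀ x a, 0 < π₀ x a)
    (hpE_pos : ∀ x e, 0 < pE pe π₀ x e)
    (hκ : ∃ κ : X → T → S → ℝ, ∀ x a s,
      (∑ e, pe x a e * (if Φ e = s then 1 else 0)) = κ x (Ψ a) s)
    (R2 : X → S → ℝ) (hR2 : ∀ x s, 0 ≤ R2 x s) :
    0 ≤ ∑ x, p x * ∑ a, π₀ x a * ∑ e, pe x a e *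
        ((pT π Ψ x (Ψ a) / pT π₀ Ψ x (Ψ a)) ^ 2
          - (pS pe π Φ x (Φ e) / pS pe π₀ Φ x (Φ e)) ^ 2) * R2 x (Φ e) := by
  obtain ⟨κ, hκ⟩ := hκ
  -- κ is nonnegative
  have hκ_nonneg : ∀ x a s, 0 ≤ κ x (Ψ a) s := by
    intro x a s
    rw [← hκ]
    exact Finset.sum_nonneg fun e _ =>
      mul_nonneg (hpe_nonneg x a e) (by positivity)
  refine Finset.sum_nonneg fun x _ => mul_nonneg (hp_nonneg x) ?_
  set W : A → ℝ := fun a => pT π Ψ x (Ψ a) / pT π₀ Ψ x (Ψ a) with hW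
  set V : S → ℝ := fun s => pS pe π Φ x s / pS pe π₀ Φ x s with hV
  -- regroup the inner sum over e by the value s = Φ e
  have step1 : ∀ a, (∑ e, pe x a e * ((W a) ^ 2 - (V (Φ e)) ^ 2) * R2 x (Φ e))
      = ∑ s, κ x (Ψ a) s * (((W a) ^ 2 - (V s) ^ 2) * R2 x s) := by
    intro a
    have : ∀ s, κ x (Ψ a) s * (((W a) ^ 2 - (V s) ^ 2) * R2 x s)
        = ∑ e, pe x a e * (if Φ e = s then 1 else 0) * (((W a) ^ 2 - (V s) ^ 2) * R2 x s) := by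
      intro s; rw [← hκ x a s, Finset.sum_mul]
    simp_rw [this]
    rw [Finset.sum_comm]
    refine Finset.sum_congr rfl fun e _ => ?_
    simp [mul_ite, ite_mul, mul_assoc]
  change 0 ≤ ∑ a, π₀ x a * ∑ e, pe x a e * ((W a) ^ 2 - (V (Φ e)) ^ 2) * R2 x (Φ e)
  simp_rw [step1, Finset.mul_sum]
  rw [Finset.sum_comm]
  refine Finset.sum_nonneg fun s _ => ?_
  -- per-s measure on actions
  set μ : A → ℝ := fun a => π₀ x a * κ x (Ψ a) s with hμdef
  have hμ_nonneg : ∀ a, 0 ≤ μ a := fun a =>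
    mul_nonneg (hπ₀_nonneg x a) (hκ_nonneg x a s)
  have hM : ∑ a, μ a = pS pe π₀ Φ x s := by
    rw [pS_eq_sum]
    exact Finset.sum_congr rfl fun a _ => by rw [hκ]
  have hP : ∑ a, μ a * W a = pS pe π Φ x s := by
    have h1 : ∑ a, μ a * W a
        = ∑ a, π₀ x a * (fun t => κ x t s * (pT π Ψ x t / pT π₀ Ψ x t)) (Ψ a) := by
      refine Finset.sum_congr rfl fun a _ => by simp [hμdef, hW, mul_assoc]
    have h2 : ∑ a, π x a * (fun t => κ x t s) (Ψ a) = pS pe π Φ x s := by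
      rw [pS_eq_sum]
      exact Finset.sum_congr rfl fun a _ => by rw [hκ]
    have e1 := sum_comp_pT π₀ Ψ x (fun t => κ x t s * (pT π Ψ x t / pT π₀ Ψ x t))
    have e2 := sum_comp_pT π Ψ x (fun t => κ x t s)
    rw [h1, e1, ← h2, e2]
    refine Finset.sum_congr rfl fun t _ => ?_
    rcases eq_or_ne (pT π₀ Ψ x t) 0 with h0 | h0
    · -- empty fiber: pT π is also zero
      have hfib : ∀ a, (if Ψ a = t then (1:ℝ) else 0) = 0 := by
        intro a
        have := (Finset.sum_eq_zero_iff_of_nonneg (fun a _ =>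
          mul_nonneg (hπ₀_nonneg x a) (by positivity))).1 h0 a (Finset.mem_univ a)
        rcases mul_eq_zero.1 this with h | h
        · exact absurd h (ne_of_gt (hπ₀_pos x a))
        · exact h
      have hπt : pT π Ψ x t = 0 := by
        unfold pT; exact Finset.sum_eq_zero fun a _ => by rw [hfib, mul_zero]
      simp [h0, hπt]
    · field_simp
  have hQ_nonneg : ∀ a, 0 ≤ μ a * (W a) ^ 2 := fun a =>
    mul_nonneg (hμ_nonneg a) (sq_nonneg _)
  -- Cauchy–Schwarz: (∑ μ W)^2 ≤ (∑ μ) * (∑ μ W^2)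
  have hCS : (∑ a, μ a * W a) ^ 2 ≤ (∑ a, μ a) * ∑ a, μ a * (W a) ^ 2 := by
    refine Finset.sum_sq_le_sum_mul_sum_of_sq_eq_mul Finset.univ
      (fun a _ => hμ_nonneg a) (fun a _ => hQ_nonneg a) (fun a _ => ?_)
    ring
  -- key bracket inequality
  have hbracket : (V s) ^ 2 * ∑ a, μ a ≤ ∑ a, μ a * (W a) ^ 2 := by
    rcases (Finset.sum_nonneg fun a _ => hμ_nonneg a :
        (0:ℝ) ≤ ∑ a, μ a).eq_or_lt' with hM0 | hMpos
    · rw [hM0, mul_zero]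
      exact Finset.sum_nonneg fun a _ => hQ_nonneg a
    · have hVs : V s = (∑ a, μ a * W a) / ∑ a, μ a := by rw [hV, hP, hM]
      have key : (V s) ^ 2 * ∑ a, μ a = (∑ a, μ a * W a) ^ 2 / ∑ a, μ a := by
        rw [hVs, div_pow]
        field_simp
      rw [key, div_le_iff₀ hMpos]
      calc (∑ a, μ a * W a) ^ 2 ≤ (∑ a, μ a) * ∑ a, μ a * (W a) ^ 2 := hCS
        _ = (∑ a, μ a * (W a) ^ 2) * (∑ a, μ a) := mul_comm _ _
  -- conclude nonnegativity of the s-term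
  have expand : ∑ a, π₀ x a * (κ x (Ψ a) s * (((W a) ^ 2 - (V s) ^ 2) * R2 x s))
      = ∑ a, (R2 x s * (μ a * (W a) ^ 2) - R2 x s * ((V s) ^ 2 * μ a)) := by
    refine Finset.sum_congr rfl fun a _ => ?_
    simp only [hμdef]
    ring
  rw [expand, Finset.sum_sub_distrib, ← Finset.mul_sum, ← Finset.mul_sum, ← mul_sub]
  refine mul_nonneg (hR2 x s) (sub_nonneg.2 ?_)
  rw [← Finset.mul_sum]
  exact hbracket
end

section
/- Let E = S × U with Φ = Prod.fst. Assume π(a|x) > 0 and π₀(a|x) > 0 for all x,a, and pE(e|x,π) > 0 and pE(e|x,π₀) > 0 for all x,e. Then the bias of the GMIPS estimator satisfies: Σ_{x} p(x) Σ_{a} π₀(a|x) Σ_{e} pe(x,a,e)·w_Φ(x,e)·q(x,a,e) − Σ_{x} p(x) Σ_{a} π(a|x) Σ_{e} pe(x,a,e)·q(x,a,e) = Σ_{x} p(x) Σ_{a} π(a|x) Σ_{e} pe(x,a,e)·(w⁻¹_{Φᶜ}(x,e) − 1)·q(x,a,e) + Σ_{x} p(x) Σ_{e} pE(e|x,π₀)·w⁻¹_{Φᶜ}(x,e)·(1/2)·Σ_{a∈A}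 Σ_{b∈A} π₀(a|x,e)·π₀(b|x,e)·(q(x,a,e) − q(x,b,e))·(w(x,b) − w(x,a)). -/
open Finset

/-- Doubly marginal distribution over `S` when `E = S × U` and `Φ = Prod.fst`:
`pS(s|x,ρ) = ∑ u, pE((s,u)|x,ρ)`. -/
noncomputable def pSp {X A S U : Type*} [Fintype A] [Fintype U]
    (pe : X → A → S × U → ℝ) (ρ : X → A → ℝ) (x : X) (s : S) : ℝ :=
  ∑ u, pE pe ρ x (s, u)

/-- Conditional complement distribution:
`p(u|x,ρ,s) = pE((s,u)|x,ρ) / pS(s|x,ρ)`. -/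
noncomputable def condU {X A S U : Type*} [Fintype A] [Fintype U]
    (pe : X → A → S × U → ℝ) (ρ : X → A → ℝ) (x : X) (s : S) (u : U) : ℝ :=
  pE pe ρ x (s, u) / pSp pe ρ x s

lemma pair_id {A : Type*} [Fintype A] (g w q : A → ℝ) :
    (1/2 : ℝ) * ∑ a, ∑ b, g a * g b * (q a - q b) * (w b - w a)
      = (∑ a, g a * q a) * (∑ a, g a * w a) - (∑ a, g a) * (∑ a, g a * (w a * q a)) := by
  have h : ∑ a, ∑ b, g a * g b * (q a - q b) * (w b - w a)
      = (∑ a, g a * q a) * (∑ b, g b * w b) - (∑ a, g a * (w a * q a)) * (∑ b, g b)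
        - (∑ a, g a) * (∑ b, g b * (w b * q b)) + (∑ a, g a * w a) * (∑ b, g b * q b) := by
    rw [Finset.sum_mul_sum, Finset.sum_mul_sum, Finset.sum_mul_sum, Finset.sum_mul_sum,
      ← Finset.sum_sub_distrib, ← Finset.sum_sub_distrib, ← Finset.sum_add_distrib]
    refine sum_congr rfl fun a _ => ?_
    rw [← Finset.sum_sub_distrib, ← Finset.sum_sub_distrib, ← Finset.sum_add_distrib]
    refine sum_congr rfl fun b _ => ?_
    ring
  rw [h]; ring

lemma pointwise_id
    {X A S U : Type*} [Fintype A] [Fintype U] [Nonempty U]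
    (π π₀ : X → A → ℝ) (pe : X → A → S × U → ℝ)
    (hπ_pos : ∀ x a, 0 < π x a) (hπ₀_pos : ∀ x a, 0 < π₀ x a)
    (hpEπ_pos : ∀ x e, 0 < pE pe π x e) (hpEπ₀_pos : ∀ x e, 0 < pE pe π₀ x e)
    (q : X → A → S × U → ℝ) (x : X) (e : S × U) :
    (∑ a, π₀ x a * (pe x a e * (pSp pe π x e.1 / pSp pe π₀ x e.1 * q x a e)))
      - ∑ a, π x a * (pe x a e * q x a e)
    = (∑ a, π x a * (pe x a e *
          ((condU pe π₀ x e.1 e.2 / condU pe π x e.1 e.2 - 1) * q x a e)))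
      + pE pe π₀ x e * (condU pe π₀ x e.1 e.2 / condU pe π x e.1 e.2) *
          ((1 / 2) * ∑ a, ∑ b,
            (π₀ x a * pe x a e / pE pe π₀ x e) *
            (π₀ x b * pe x b e / pE pe π₀ x e) *
            (q x a e - q x b e) *
            (π x b / π₀ x b - π x a / π₀ x a)) := by
  obtain ⟨s, u⟩ := e
  have hSπ : 0 < pSp pe π x s := Finset.sum_pos (fun u _ => hpEπ_pos x (s, u)) univ_nonempty
  have hS₀ : 0 < pSp pe π₀ x s := Finset.sum_pos (fun u _ => hpEπ₀_pos x (s, u)) univ_nonempty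
  have hPπ : 0 < pE pe π x (s, u) := hpEπ_pos x (s, u)
  have hP₀ : 0 < pE pe π₀ x (s, u) := hpEπ₀_pos x (s, u)
  set Sπ := pSp pe π x s with hSπdef
  set S₀ := pSp pe π₀ x s with hS₀def
  set Pπ := pE pe π x (s, u) with hPπdef
  set P₀ := pE pe π₀ x (s, u) with hP₀def
  set Aq := ∑ a, π₀ x a * pe x a (s, u) * q x a (s, u) with hAq
  set Bq := ∑ a, π x a * pe x a (s, u) * q x a (s, u) with hBq
  -- rewrite the three single sums
  have h1 : (∑ a, π₀ x a * (pe x a (s, u) * (Sπ / S₀ * q x a (s, u)))) = Sπ / S₀ * Aq := by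
    rw [hAq, Finset.mul_sum]; exact sum_congr rfl fun a _ => by ring
  have h2 : (∑ a, π x a * (pe x a (s, u) * q x a (s, u))) = Bq := by
    rw [hBq]; exact sum_congr rfl fun a _ => by ring
  have h3 : (∑ a, π x a * (pe x a (s, u) *
      ((condU pe π₀ x s u / condU pe π x s u - 1) * q x a (s, u))))
      = (condU pe π₀ x s u / condU pe π x s u - 1) * Bq := by
    rw [hBq, Finset.mul_sum]; exact sum_congr rfl fun a _ => by ring
  -- the double sum
  have hgw : ∀ a : A, (π₀ x a * pe x a (s, u)) * (π x a / π₀ x a) = π x a * pe x a (s, u) := by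
    intro a
    have h0 := (hπ₀_pos x a).ne'
    field_simp
  have hgwq : ∀ a : A, (π₀ x a * pe x a (s, u)) * (π x a / π₀ x a * q x a (s, u))
      = π x a * pe x a (s, u) * q x a (s, u) := by
    intro a
    have h0 := (hπ₀_pos x a).ne'
    field_simp
  have h4 : ((1 : ℝ) / 2) * ∑ a, ∑ b,
      (π₀ x a * pe x a (s, u) / P₀) * (π₀ x b * pe x b (s, u) / P₀) *
      (q x a (s, u) - q x b (s, u)) * (π x b / π₀ x b - π x a / π₀ x a)
      = (1 / P₀) ^ 2 * (Aq * Pπ - P₀ * Bq) := by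
    have key := pair_id (fun a => π₀ x a * pe x a (s, u))
      (fun a => π x a / π₀ x a) (fun a => q x a (s, u))
    have e1 : (∑ a, (π₀ x a * pe x a (s, u)) * (π x a / π₀ x a)) = Pπ := by
      rw [hPπdef]; unfold pE; exact sum_congr rfl fun a _ => hgw a
    have e2 : (∑ a, π₀ x a * pe x a (s, u)) = P₀ := by rw [hP₀def]; rfl
    have e3 : (∑ a, (π₀ x a * pe x a (s, u)) * (π x a / π₀ x a * q x a (s, u))) = Bq := by
      rw [hBq]; exact sum_congr rfl fun a _ => hgwq a
    have e4 : (∑ a, (π₀ x a * pe x a (s, u)) * q x a (s, u)) = Aq := by rw [hAq]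
    rw [e1, e2, e3, e4] at key
    have hfac : ∑ a, ∑ b,
        (π₀ x a * pe x a (s, u) / P₀) * (π₀ x b * pe x b (s, u) / P₀) *
        (q x a (s, u) - q x b (s, u)) * (π x b / π₀ x b - π x a / π₀ x a)
        = (1 / P₀) ^ 2 * ∑ a, ∑ b,
          (π₀ x a * pe x a (s, u)) * (π₀ x b * pe x b (s, u)) *
          (q x a (s, u) - q x b (s, u)) * (π x b / π₀ x b - π x a / π₀ x a) := by
      rw [Finset.mul_sum]
      refine sum_congr rfl fun a _ => ?_
      rw [Finset.mul_sum]
      refine sum_congr rfl fun b _ => ?_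
      ring
    rw [hfac, ← key]
    ring
  rw [h1, h2, h3, h4]
  unfold condU
  rw [← hSπdef, ← hS₀def, ← hPπdef, ← hP₀def]
  field_simp
  ring

/-- Bias of the GMIPS estimator (Theorem 3.8): under common ranking embedding
support (via the positivity assumptions), even when the no-direct-effect
assumption fails, the bias of GMIPS decomposes into a term measuring the
violation of the user behavior model on ranking embeddings and a pairwise
interaction term measuring the violation of the no-direct-effect assumption. -/
theorem gmips_bias
    {X A S U : Type*}
    [Fintype X] [Fintype A] [Fintype S] [Fintype U]
    [Nonempty X] [Nonempty A] [Nonempty S] [Nonempty U]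
    (p : X → ℝ) (hp_nonneg : ∀ x, 0 ≤ p x) (hp_sum : ∑ x, p x = 1)
    (π π₀ : X → A → ℝ)
    (hπ_nonneg : ∀ x a, 0 ≤ π x a) (hπ_sum : ∀ x, ∑ a, π x a = 1)
    (hπ₀_nonneg : ∀ x a, 0 ≤ π₀ x a) (hπ₀_sum : ∀ x, ∑ a, π₀ x a = 1)
    (pe : X → A → S × U → ℝ)
    (hpe_nonneg : ∀ x a e, 0 ≤ pe x a e) (hpe_sum : ∀ x a, ∑ e, pe x a e = 1)
    (hπ_pos : ∀ x a, 0 < π x a) (hπ₀_pos : ∀ x a, 0 < π₀ x a)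
    (hpEπ_pos : ∀ x e, 0 < pE pe π x e) (hpEπ₀_pos : ∀ x e, 0 < pE pe π₀ x e)
    (q : X → A → S × U → ℝ) :
    (∑ x, p x * ∑ a, π₀ x a * ∑ e, pe x a e *
        (pSp pe π x e.1 / pSp pe π₀ x e.1 * q x a e))
      - (∑ x, p x * ∑ a, π x a * ∑ e, pe x a e * q x a e)
    = (∑ x, p x * ∑ a, π x a * ∑ e, pe x a e *
          ((condU pe π₀ x e.1 e.2 / condU pe π x e.1 e.2 - 1) * q x a e))
      + ∑ x, p x * ∑ e, pE pe π₀ x e *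
          (condU pe π₀ x e.1 e.2 / condU pe π x e.1 e.2) *
          ((1 / 2) * ∑ a, ∑ b,
            (π₀ x a * pe x a e / pE pe π₀ x e) *
            (π₀ x b * pe x b e / pE pe π₀ x e) *
            (q x a e - q x b e) *
            (π x b / π₀ x b - π x a / π₀ x a)) := by
  rw [← Finset.sum_sub_distrib, ← Finset.sum_add_distrib]
  refine sum_congr rfl fun x _ => ?_
  rw [← mul_sub, ← mul_add]
  congr 1
  -- exchange a- and e-sums into e-outer form
  have swap : ∀ (ρ : X → A → ℝ) (f : A → S × U → ℝ),
      (∑ a, ρ x a * ∑ e, f a e) = ∑ e : S × U, ∑ a, ρ x a * f a e := by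
    intro ρ f
    simp_rw [Finset.mul_sum]
    exact Finset.sum_comm
  rw [swap π₀ (fun a e => pe x a e * (pSp pe π x e.1 / pSp pe π₀ x e.1 * q x a e)),
    swap π (fun a e => pe x a e * q x a e),
    swap π (fun a e => pe x a e *
      ((condU pe π₀ x e.1 e.2 / condU pe π x e.1 e.2 - 1) * q x a e)),
    ← Finset.sum_sub_distrib, ← Finset.sum_add_distrib]
  exact sum_congr rfl fun e _ =>
    pointwise_id π π₀ pe hπ_pos hπ₀_pos hpEπ_pos hpEπ₀_pos q x e
end

section
/- Let m be a natural number, let f, g, h : Fin m → ℝ and c ∈ ℝ, and suppose Σ_{s} g(s) = 1. Then Σ_{s} f(s)·g(s)·( h(s) − c·Σ_{t} g(t)·h(t) ) = (1 − c)·Σ_{s} f(s)·g(s)·h(s) + c·Σ_{s < t} g(s)·g(t)·( h(s) − h(t) )·( f(s) − f(t) ), where the last sum ranges over all pairs s < t in Fin m. -/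
open Finset

/-- Lemma C.2 of the paper: a purely algebraic identity. If `g` sums to one,
then `∑ s, f s · g s · (h s − c · ∑ t, g t · h t)` equals
`(1 − c) · ∑ s, f s · g s · h s` plus `c` times the sum over all pairs
`s < t` of `g s · g t · (h s − h t) · (f s − f t)`. -/
theorem lemma_C2 (m : ℕ) (f g h : Fin m → ℝ) (c : ℝ)
    (hg : ∑ s, g s = 1) :
    ∑ s, f s * g s * (h s - c * ∑ t, g t * h t)
      = (1 - c) * ∑ s, f s * g s * h s
        + c * ∑ s, ∑ t ∈ Finset.Ioi s,
            g s * g t * (h s - h t) * (f s - f t) := by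
  set F : Fin m → Fin m → ℝ := fun s t => g s * g t * (h s - h t) * (f s - f t) with hF
  have key : ∑ s, ∑ t ∈ Ioi s, F s t
      = (∑ s, f s * g s * h s) - (∑ s, f s * g s) * (∑ s, g s * h s) := by
    have h1 := Finset.sum_sum_Ioi_add_eq_sum_sum_off_diag F
    have hsym : ∀ i j, F j i + F i j = 2 * F i j := by intro i j; simp [hF]; ring
    have hl : ∑ i, ∑ j ∈ Ioi i, (F j i + F i j) = 2 * ∑ s, ∑ t ∈ Ioi s, F s t := by
      simp_rw [hsym, ← Finset.mul_sum]
    have hr : ∀ i : Fin m, ∑ j ∈ ({i}ᶜ : Finset (Fin m)), F j i = ∑ j, F j i := by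
      intro i
      have := Finset.sum_compl_add_sum ({i} : Finset (Fin m)) (fun j => F j i)
      simp [hF] at this ⊢
      linarith [this]
    have hcol : ∀ i : Fin m, ∑ j, F j i
        = (∑ j, f j * g j * h j) * g i + f i * g i * h i * (∑ j, g j)
          - (∑ j, g j * h j) * (f i * g i) - (∑ j, f j * g j) * (g i * h i) := by
      intro i
      rw [Finset.sum_mul, Finset.mul_sum, Finset.sum_mul, Finset.sum_mul,
        ← Finset.sum_add_distrib, ← Finset.sum_sub_distrib, ← Finset.sum_sub_distrib]
      exact Finset.sum_congr rfl fun j _ => by simp [hF]; ring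
    rw [hl] at h1
    replace h1 := h1.trans (Finset.sum_congr rfl fun i _ =>
      (Finset.sum_subset (Finset.subset_univ _) (fun x _ hx => by
        have hxi : x = i := by simpa using hx
        simp [hxi, hF])).trans (hcol i))
    rw [hg] at h1
    rw [Finset.sum_sub_distrib, Finset.sum_sub_distrib, Finset.sum_add_distrib,
      ← Finset.mul_sum, ← Finset.mul_sum, ← Finset.mul_sum] at h1
    simp only [mul_one] at h1
    rw [hg, mul_one] at h1
    linarith [h1]
  rw [key]
  rw [Finset.sum_congr rfl (fun s _ => by ring :
    ∀ s ∈ univ, f s * g s * (h s - c * ∑ t, g t * h t)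
      = f s * g s * h s - (c * ∑ t, g t * h t) * (f s * g s))]
  rw [Finset.sum_sub_distrib, ← Finset.mul_sum]
  ring
end

section
/- Let E = S × U with Φ = Prod.fst. Assume π(a|x) > 0 and π₀(a|x) > 0 for all x,a, and pE(e|x,π) > 0 and pE(e|x,π₀) > 0 for all x,e, and let R2 : X → S → ℝ be any function (the conditional second moment of the reward given (x,Φ(e))). Then Σ_{x} p(x) Σ_{a} π₀(a|x) Σ_{e} pe(x,a,e)·( w(x,e)² − w_Φ(x,e)² )·R2(x,Φ(e)) = Σ_{x} p(x) Σ_{s∈S} pS(s|x,π₀)·( pS(s|x,π)/pS(s|x,π₀) )²·[ Σ_{u∈U} p(u|x,π₀,s)·wᶜ(x,s,u)² − ( Σ_{u∈U} p(u|x,π₀,s)·wᶜ(x,s,u) )² ]·R2(x,s); that is, the variance reduction of GMIPS relative to MSIPS equals the π₀-expectation of the squared marginalized weight times the conditional variance of the complement weight times the conditional second moment of the reward. -/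
open Finset

/-- Variance reduction of GMIPS relative to MSIPS (Theorem C.1): the
difference of the (scaled) variances equals the `π₀`-expectation of the
squared marginalized weight times the conditional variance of the complement
weight times the conditional second moment of the reward. -/
theorem gmips_variance_reduction_vs_msips
    {X A S U : Type*}
    [Fintype X] [Fintype A] [Fintype S] [Fintype U]
    [Nonempty X] [Nonempty A] [Nonempty S] [Nonempty U]
    (p : X → ℝ) (hp_nonneg : ∀ x, 0 ≤ p x) (hp_sum : ∑ x, p x = 1)
    (π π₀ : X → A → ℝ)
    (hπ_nonneg : ∀ x a, 0 ≤ π x a) (hπ_sum : ∀ x, ∑ a, π x a = 1)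
    (hπ₀_nonneg : ∀ x a, 0 ≤ π₀ x a) (hπ₀_sum : ∀ x, ∑ a, π₀ x a = 1)
    (pe : X → A → S × U → ℝ)
    (hpe_nonneg : ∀ x a e, 0 ≤ pe x a e) (hpe_sum : ∀ x a, ∑ e, pe x a e = 1)
    (hπ_pos : ∀ x a, 0 < π x a) (hπ₀_pos : ∀ x a, 0 < π₀ x a)
    (hpEπ_pos : ∀ x e, 0 < pE pe π x e) (hpEπ₀_pos : ∀ x e, 0 < pE pe π₀ x e)
    (R2 : X → S → ℝ) :
    ∑ x, p x * ∑ a, π₀ x a * ∑ e, pe x a e *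
        ((pE pe π x e / pE pe π₀ x e) ^ 2
          - (pSp pe π x e.1 / pSp pe π₀ x e.1) ^ 2) * R2 x e.1
      = ∑ x, p x * ∑ s, pSp pe π₀ x s * (pSp pe π x s / pSp pe π₀ x s) ^ 2 *
          ((∑ u, condU pe π₀ x s u *
              (condU pe π x s u / condU pe π₀ x s u) ^ 2)
            - (∑ u, condU pe π₀ x s u *
                (condU pe π x s u / condU pe π₀ x s u)) ^ 2) * R2 x s := by
  refine Finset.sum_congr rfl fun x _ => ?_
  congr 1
  have hSπ : ∀ s, 0 < pSp pe π x s :=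
    fun s => Finset.sum_pos (fun u _ => hpEπ_pos x (s, u)) Finset.univ_nonempty
  have hS₀ : ∀ s, 0 < pSp pe π₀ x s :=
    fun s => Finset.sum_pos (fun u _ => hpEπ₀_pos x (s, u)) Finset.univ_nonempty
  -- Step 1: collapse the action sum into pE pe π₀.
  have h1 : (∑ a, π₀ x a * ∑ e, pe x a e *
        ((pE pe π x e / pE pe π₀ x e) ^ 2
          - (pSp pe π x e.1 / pSp pe π₀ x e.1) ^ 2) * R2 x e.1)
      = ∑ e : S × U, pE pe π₀ x e *
        (((pE pe π x e / pE pe π₀ x e) ^ 2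
          - (pSp pe π x e.1 / pSp pe π₀ x e.1) ^ 2) * R2 x e.1) := by
    simp_rw [Finset.mul_sum]
    rw [Finset.sum_comm]
    refine Finset.sum_congr rfl fun e _ => ?_
    simp only [pE]
    rw [Finset.sum_mul]
    exact Finset.sum_congr rfl fun a _ => by ring
  rw [h1, Fintype.sum_prod_type]
  refine Finset.sum_congr rfl fun s _ => ?_
  have hS₀' := (hS₀ s).ne'
  have hSπ' := (hSπ s).ne'
  -- T2 = 1
  have h2 : (∑ u, condU pe π₀ x s u * (condU pe π x s u / condU pe π₀ x s u)) = 1 := by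
    have : ∀ u, condU pe π₀ x s u * (condU pe π x s u / condU pe π₀ x s u)
        = condU pe π x s u := by
      intro u
      have h₀ : condU pe π₀ x s u ≠ 0 :=
        (div_pos (hpEπ₀_pos x (s, u)) (hS₀ s)).ne'
      field_simp
    simp_rw [this, condU, ← Finset.sum_div]
    rw [show (∑ u, pE pe π x (s, u)) = pSp pe π x s from rfl]
    exact div_self hSπ'
  rw [h2]
  -- T1 per-term rewrite
  have h3 : ∀ u, condU pe π₀ x s u * (condU pe π x s u / condU pe π₀ x s u) ^ 2
      = pE pe π x (s, u) ^ 2 * pSp pe π₀ x s / (pE pe π₀ x (s, u) * pSp pe π x s ^ 2) := by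
    intro u
    have hE₀ := (hpEπ₀_pos x (s, u)).ne'
    rw [condU, condU]
    field_simp
  simp_rw [h3]
  -- Both sides equal  (∑ u, pEπ²/pE₀) * R2 − pSπ²/pS₀ * R2.
  have hL : (∑ u, pE pe π₀ x (s, u) *
        (((pE pe π x (s, u) / pE pe π₀ x (s, u)) ^ 2
          - (pSp pe π x s / pSp pe π₀ x s) ^ 2) * R2 x s))
      = (∑ u, pE pe π x (s, u) ^ 2 / pE pe π₀ x (s, u)) * R2 x s
        - pSp pe π x s ^ 2 / pSp pe π₀ x s * R2 x s := by
    have key : ∀ u, pE pe π₀ x (s, u) *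
        (((pE pe π x (s, u) / pE pe π₀ x (s, u)) ^ 2
          - (pSp pe π x s / pSp pe π₀ x s) ^ 2) * R2 x s)
        = pE pe π x (s, u) ^ 2 / pE pe π₀ x (s, u) * R2 x s
          - pE pe π₀ x (s, u) * (pSp pe π x s ^ 2 / pSp pe π₀ x s ^ 2 * R2 x s) := by
      intro u
      have hE₀ := (hpEπ₀_pos x (s, u)).ne'
      field_simp
    simp_rw [key, Finset.sum_sub_distrib, ← Finset.sum_mul]
    rw [show (∑ u, pE pe π₀ x (s, u)) = pSp pe π₀ x s from rfl]
    congr 1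
    field_simp
  rw [hL]
  have hR : pSp pe π₀ x s * (pSp pe π x s / pSp pe π₀ x s) ^ 2 *
        ((∑ u, pE pe π x (s, u) ^ 2 * pSp pe π₀ x s /
            (pE pe π₀ x (s, u) * pSp pe π x s ^ 2)) - 1 ^ 2) * R2 x s
      = (∑ u, pE pe π x (s, u) ^ 2 / pE pe π₀ x (s, u)) * R2 x s
        - pSp pe π x s ^ 2 / pSp pe π₀ x s * R2 x s := by
    rw [one_pow, mul_sub, sub_mul, mul_one]
    congr 1
    · rw [Finset.mul_sum, Finset.sum_mul, Finset.sum_mul]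
      refine Finset.sum_congr rfl fun u _ => ?_
      have hE₀ := (hpEπ₀_pos x (s, u)).ne'
      field_simp
    · field_simp
  rw [hR]
end

section
/- Let E = S × U with Φ = Prod.fst. Assume π(a|x) > 0 and π₀(a|x) > 0 for all x,a, pE(e|x,π) > 0 and pE(e|x,π₀) > 0 for all x,e, and R2 : X → S → ℝ satisfies R2(x,s) ≥ 0 for all x,s. Then Σ_{x} p(x) Σ_{a} π₀(a|x) Σ_{e} pe(x,a,e)·( w(x,e)² − w_Φ(x,e)² )·R2(x,Φ(e)) ≥ 0; that is, under the user behavior model on ranking embeddings the GMIPS estimator with doubly marginalized weights has no larger variance than the MSIPS estimator. -/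
open Finset

/-- GMIPS has no larger variance than MSIPS: the second moment of the MSIPS
estimand minus that of the GMIPS estimand (with doubly marginalized weights)
is nonnegative. -/
theorem gmips_second_moment_le_msips
    {X A S U : Type*}
    [Fintype X] [Fintype A] [Fintype S] [Fintype U]
    [Nonempty X] [Nonempty A] [Nonempty S] [Nonempty U]
    (p : X → ℝ) (hp_nonneg : ∀ x, 0 ≤ p x) (hp_sum : ∑ x, p x = 1)
    (π π₀ : X → A → ℝ)
    (hπ_nonneg : ∀ x a, 0 ≤ π x a) (hπ_sum : ∀ x, ∑ a, π x a = 1)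
    (hπ₀_nonneg : ∀ x a, 0 ≤ π₀ x a) (hπ₀_sum : ∀ x, ∑ a, π₀ x a = 1)
    (pe : X → A → S × U → ℝ)
    (hpe_nonneg : ∀ x a e, 0 ≤ pe x a e) (hpe_sum : ∀ x a, ∑ e, pe x a e = 1)
    (hπ_pos : ∀ x a, 0 < π x a) (hπ₀_pos : ∀ x a, 0 < π₀ x a)
    (hpEπ_pos : ∀ x e, 0 < pE pe π x e) (hpEπ₀_pos : ∀ x e, 0 < pE pe π₀ x e)
    (R2 : X → S → ℝ) (hR2 : ∀ x s, 0 ≤ R2 x s) :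
    0 ≤ ∑ x, p x * ∑ a, π₀ x a * ∑ e, pe x a e *
        ((pE pe π x e / pE pe π₀ x e) ^ 2
          - (pSp pe π x e.1 / pSp pe π₀ x e.1) ^ 2) * R2 x e.1 := by
  apply Finset.sum_nonneg
  intro x _
  apply mul_nonneg (hp_nonneg x)
  set g : S × U → ℝ := fun e =>
    ((pE pe π x e / pE pe π₀ x e) ^ 2
      - (pSp pe π x e.1 / pSp pe π₀ x e.1) ^ 2) * R2 x e.1 with hg
  have hgoal : ∑ a, π₀ x a * ∑ e, pe x a e *
        ((pE pe π x e / pE pe π₀ x e) ^ 2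
          - (pSp pe π x e.1 / pSp pe π₀ x e.1) ^ 2) * R2 x e.1
      = ∑ e : S × U, pE pe π₀ x e * g e := by
    simp only [Finset.mul_sum]
    rw [Finset.sum_comm]
    apply Finset.sum_congr rfl
    intro e _
    rw [show pE pe π₀ x e * g e = ∑ a, π₀ x a * pe x a e * g e from by
      rw [pE, Finset.sum_mul]]
    apply Finset.sum_congr rfl
    intro a _
    simp only [hg]; ring
  rw [hgoal, Fintype.sum_prod_type]
  apply Finset.sum_nonneg
  intro s _
  have hS₀ : 0 < pSp pe π₀ x s :=
    Finset.sum_pos (fun u _ => hpEπ₀_pos x (s, u)) Finset.univ_nonempty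
  have key : (∑ u, pE pe π x (s, u)) ^ 2 / ∑ u, pE pe π₀ x (s, u)
      ≤ ∑ u, (pE pe π x (s, u)) ^ 2 / pE pe π₀ x (s, u) :=
    Finset.sq_sum_div_le_sum_sq_div _ _ (fun u _ => hpEπ₀_pos x (s, u))
  have h2 : ∑ u, pE pe π₀ x (s, u) * g (s, u)
      = (∑ u, (pE pe π x (s, u)) ^ 2 / pE pe π₀ x (s, u)) * R2 x s
        - (∑ u, pE pe π₀ x (s, u)) * ((pSp pe π x s / pSp pe π₀ x s) ^ 2 * R2 x s) := by
    rw [Finset.sum_mul, Finset.sum_mul, ← Finset.sum_sub_distrib]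
    apply Finset.sum_congr rfl
    intro u _
    have h0 := (hpEπ₀_pos x (s, u)).ne'
    rw [hg]
    field_simp
  rw [h2]
  have hSeq : (∑ u, pE pe π₀ x (s, u)) = pSp pe π₀ x s := rfl
  have hSeqπ : (∑ u, pE pe π x (s, u)) = pSp pe π x s := rfl
  rw [hSeq]
  have hfold : pSp pe π₀ x s * ((pSp pe π x s / pSp pe π₀ x s) ^ 2 * R2 x s)
      = (pSp pe π x s) ^ 2 / pSp pe π₀ x s * R2 x s := by
    field_simp
  rw [hfold, ← sub_mul]
  apply mul_nonneg _ (hR2 x s)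
  rw [sub_nonneg]
  rw [← hSeq, ← hSeqπ]
  exact key
end

section
/- Let E = S × U with Φ = Prod.fst. Assume π(a|x) > 0 and π₀(a|x) > 0 for all x,a, and pE(e|x,π) > 0 and pE(e|x,π₀) > 0 for all x,e. Assume no direct effect (Assumption 3.2): q(x,a,e) = q̂(x,e) for some q̂ : X → E → ℝ and all x,a,e. Then Σ_{x} p(x) Σ_{a} π₀(a|x) Σ_{e} pe(x,a,e)·w_Φ(x,e)·q̂(x,e) − Σ_{x} p(x) Σ_{a} π(a|x) Σ_{e} pe(x,a,e)·q̂(x,e) = Σ_{x} p(x) Σ_{e} pE(e|x,π)·( w⁻¹_{Φᶜ}(x,e) − 1 )·q̂(x,e); that is, when Assumption 3.2 holds but the user behavior model on ranking embeddings may fail, the bias of the GMIPS estimator equals the π-expectation of the deviation of the inverse complement weight from one times the expected reward. -/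
open Finset

/-- Bias of the GMIPS estimator when the no-direct-effect assumption holds
but the user behavior model on ranking embeddings may fail (Theorem C.3):
the bias equals the `π`-expectation of the deviation of the inverse
complement weight from one times the expected reward. -/
theorem gmips_bias_no_direct_effect
    {X A S U : Type*}
    [Fintype X] [Fintype A] [Fintype S] [Fintype U]
    [Nonempty X] [Nonempty A] [Nonempty S] [Nonempty U]
    (p : X → ℝ) (hp_nonneg : ∀ x, 0 ≤ p x) (hp_sum : ∑ x, p x = 1)
    (π π₀ : X → A → ℝ)
    (hπ_nonneg : ∀ x a, 0 ≤ π x a) (hπ_sum : ∀ x, ∑ a, π x a = 1)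
    (hπ₀_nonneg : ∀ x a, 0 ≤ π₀ x a) (hπ₀_sum : ∀ x, ∑ a, π₀ x a = 1)
    (pe : X → A → S × U → ℝ)
    (hpe_nonneg : ∀ x a e, 0 ≤ pe x a e) (hpe_sum : ∀ x a, ∑ e, pe x a e = 1)
    (hπ_pos : ∀ x a, 0 < π x a) (hπ₀_pos : ∀ x a, 0 < π₀ x a)
    (hpEπ_pos : ∀ x e, 0 < pE pe π x e) (hpEπ₀_pos : ∀ x e, 0 < pE pe π₀ x e)
    (q : X → A → S × U → ℝ) (qh : X → S × U → ℝ)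
    (hq : ∀ x a e, q x a e = qh x e) :
    (∑ x, p x * ∑ a, π₀ x a * ∑ e, pe x a e *
        (pSp pe π x e.1 / pSp pe π₀ x e.1 * qh x e))
      - (∑ x, p x * ∑ a, π x a * ∑ e, pe x a e * qh x e)
    = ∑ x, p x * ∑ e, pE pe π x e *
        ((condU pe π₀ x e.1 e.2 / condU pe π x e.1 e.2 - 1) * qh x e) := by
  have swap : ∀ (ρ : X → A → ℝ) (x : X) (f : S × U → ℝ),
      (∑ a, ρ x a * ∑ e, pe x a e * f e) = ∑ e, pE pe ρ x e * f e := by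
    intro ρ x f
    simp only [Finset.mul_sum, pE, Finset.sum_mul]
    rw [Finset.sum_comm]
    apply Finset.sum_congr rfl; intros; apply Finset.sum_congr rfl; intros; ring
  have hpSπ : ∀ x s, 0 < pSp pe π x s := fun x s =>
    Finset.sum_pos (fun u _ => hpEπ_pos x (s, u)) Finset.univ_nonempty
  have hpSπ₀ : ∀ x s, 0 < pSp pe π₀ x s := fun x s =>
    Finset.sum_pos (fun u _ => hpEπ₀_pos x (s, u)) Finset.univ_nonempty
  rw [← Finset.sum_sub_distrib]
  apply Finset.sum_congr rfl
  intro x _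
  rw [swap π₀ x, swap π x, ← mul_sub, ← Finset.sum_sub_distrib]
  congr 1
  apply Finset.sum_congr rfl
  intro e _
  obtain ⟨s, u⟩ := e
  simp only [condU]
  have h1 := (hpSπ x s).ne'
  have h2 := (hpSπ₀ x s).ne'
  have h3 := (hpEπ_pos x (s, u)).ne'
  have h4 := (hpEπ₀_pos x (s, u)).ne'
  field_simp
end

section
/- Let Ψ : A → T be a map into a finite type T, and define pT(t|x,ρ) := Σ_{a∈A} ρ(a|x)·𝟙{Ψ(a)=t} and the generalized importance weight w_Ψ(x,a) := pT(Ψ(a)|x,π)/pT(Ψ(a)|x,π₀) (division by zero interpreted as zero). Suppose the expected reward satisfies q(x,a) = q̃(x,Ψ(a)) for some q̃ : X → T → ℝ and all x,a, and suppose common support holds: for all x,t, pT(t|x,π) > 0 implies pT(t|x,π₀) > 0. Then the GIPS estimator is unbiased: Σ_{x} p(x) Σ_{a} π₀(a|x)·w_Ψ(x,a)·q̃(x,Ψ(a)) = Σ_{x} p(x) Σ_{a} π(a|x)·q̃(x,Ψ(a)). In particular, taking Ψ the identity yields unbiasedness of SIPS, and taking Ψ the appropriate position subset yields unbiasedness of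 IIPS and RIPS under their respective user behavior assumptions. -/
open Finset

lemma pT_eq_filter {X A T : Type*} [Fintype A] [DecidableEq T]
    (ρ : X → A → ℝ) (Ψ : A → T) (x : X) (t : T) :
    pT ρ Ψ x t = ∑ a ∈ univ.filter (fun a => Ψ a = t), ρ x a := by
  rw [pT, sum_filter]
  simp [mul_ite]

lemma pT_nonneg {X A T : Type*} [Fintype A] [DecidableEq T]
    (ρ : X → A → ℝ) (Ψ : A → T) (x : X) (hρ : ∀ a, 0 ≤ ρ x a) (t : T) :
    0 ≤ pT ρ Ψ x t := by
  rw [pT_eq_filter]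
  exact sum_nonneg fun a _ => hρ a

lemma fiber_sum {A T : Type*} [Fintype A] [Fintype T] [DecidableEq T]
    (Ψ : A → T) (ρ : A → ℝ) (g : T → ℝ) :
    ∑ a, ρ a * g (Ψ a) = ∑ t, (∑ a ∈ univ.filter (fun a => Ψ a = t), ρ a) * g t := by
  rw [← Finset.sum_fiberwise univ Ψ (fun a => ρ a * g (Ψ a))]
  refine Finset.sum_congr rfl fun t _ => ?_
  rw [Finset.sum_mul]
  refine Finset.sum_congr rfl fun a ha => ?_
  rw [mem_filter] at ha
  rw [ha.2]

/-- Unbiasedness of the GIPS estimator: if the expected reward depends on the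
ranking action only through the subset `Ψ(a)` and common support holds on the
marginal distributions over `T`, then the GIPS estimand equals the
position-wise policy value of the target policy.  Taking `Ψ` the identity
yields unbiasedness of SIPS; taking `Ψ` the appropriate position subset
yields unbiasedness of IIPS and RIPS under their user behavior assumptions. -/
theorem gips_unbiased
    {X A T : Type*} [Fintype X] [Fintype A] [Fintype T] [DecidableEq T]
    [Nonempty X] [Nonempty A]
    (p : X → ℝ) (hp_nonneg : ∀ x, 0 ≤ p x) (hp_sum : ∑ x, p x = 1)
    (π π₀ : X → A → ℝ)
    (hπ_nonneg : ∀ x a, 0 ≤ π x a) (hπ_sum : ∀ x, ∑ a, π x a = 1)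
    (hπ₀_nonneg : ∀ x a, 0 ≤ π₀ x a) (hπ₀_sum : ∀ x, ∑ a, π₀ x a = 1)
    (Ψ : A → T) (q : X → A → ℝ) (qt : X → T → ℝ)
    (hq : ∀ x a, q x a = qt x (Ψ a))
    (hsupp : ∀ x t, 0 < pT π Ψ x t → 0 < pT π₀ Ψ x t) :
    ∑ x, p x * ∑ a, π₀ x a *
        (pT π Ψ x (Ψ a) / pT π₀ Ψ x (Ψ a)) * qt x (Ψ a)
      = ∑ x, p x * ∑ a, π x a * qt x (Ψ a) := by
  refine Finset.sum_congr rfl fun x _ => ?_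
  congr 1
  have h1 : ∑ a, π₀ x a * (pT π Ψ x (Ψ a) / pT π₀ Ψ x (Ψ a)) * qt x (Ψ a)
      = ∑ a, π₀ x a * ((pT π Ψ x (Ψ a) / pT π₀ Ψ x (Ψ a)) * qt x (Ψ a)) := by
    simp [mul_assoc]
  rw [h1, fiber_sum Ψ (π₀ x) (fun t => (pT π Ψ x t / pT π₀ Ψ x t) * qt x t),
      fiber_sum Ψ (π x) (fun t => qt x t)]
  refine Finset.sum_congr rfl fun t _ => ?_
  rw [← pT_eq_filter, ← pT_eq_filter]
  by_cases h0 : pT π₀ Ψ x t = 0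
  · have hπ0 : pT π Ψ x t = 0 := by
      by_contra h
      have hpos : 0 < pT π Ψ x t :=
        lt_of_le_of_ne (pT_nonneg π Ψ x (fun a => hπ_nonneg x a) t) (Ne.symm h)
      exact absurd (hsupp x t hpos) (by rw [h0]; exact lt_irrefl 0)
    simp [h0, hπ0]
  · field_simp
end
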